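/- Entropy production is nonnegative: let n ≥ 1, θ > 0, ρ > 0, κ ≥ 0, C₀ > 0, let m : Fin n → ℝ and ρ' : Fin n → ℝ (the species densities) satisfy m_k > 0, ρ'_k > 0 for all k and ∑_k ρ'_k = ρ; set Y_k = ρ'_k/ρ, p_k = θ ρ'_k/m_k, π_m = ∑_k p_k. Let D be a real 3×3 matrix (the symmetric velocity gradient), h ∈ ℝ³ (the temperature gradient), G : Fin n → ℝ³ (the partial-pressure gradients), and let g, ω : Fin n → ℝ satisfy −ρ ∑_k g_k ω_k ≥ 0. Define the diffusion fluxes F_k := −(C₀/π_m) ∑_l C(Y)_{kl} G_l. Then σ := (2ρ/θ) ∑_{i,j} D_{ij}² + κ ‖h‖²/θ² − ∑_k ⟨F_k, G_k⟩/(m_k p_k) − ρ ∑_k g_k ω_k ≥ 0. In particular, the multicomponent-diffusion contribution satisfies ∑_{k,l} C(Y)_{kl} ⟨G_l, G_k⟩/(m_k p_k) ≥ 0. -/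

import Mathlib

open scoped BigOperators RealInnerProductSpace

/-- The Maxwell–Stefan mixture diffusion matrix: diagonal entries `∑_{i ≠ k} Y i`,
off-diagonal entries `-Y k`. -/
noncomputable def mixC {n : ℕ} (Y : Fin n → ℝ) : Matrix (Fin n) (Fin n) ℝ :=
  Matrix.of fun k l => if k = l then ∑ i ∈ Finset.univ.erase k, Y i else -Y k

/-!
Since `C(w) = (∑ᵢ wᵢ) • 1 - w 1ᵀ`, the diffusion form `∑_{k,l} C(w)_{kl} ⟪G_l, G_k⟫ / w_k`
equals `(∑ᵢ wᵢ) ∑_k ‖G_k‖² / w_k - ‖∑_k G_k‖²`, which is nonnegative for positive weights by the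
triangle inequality and Cauchy–Schwarz in Sedrakyan's form. With `m_k p_k = θ ρ Y_k`, the flux
term of `σ` is this form scaled by `-C₀ / π_m ≤ 0`; the other terms are nonnegative by hypothesis.
-/

open Finset

theorem norm_sum_sq_le_sum_mul_sum_norm_sq_div {ι E : Type*} [SeminormedAddCommGroup E]
    (s : Finset ι) (G : ι → E) {w : ι → ℝ} (hw : ∀ i ∈ s, 0 < w i) :
    ‖∑ i ∈ s, G i‖ ^ 2 ≤ (∑ i ∈ s, w i) * ∑ i ∈ s, ‖G i‖ ^ 2 / w i :=
  calc ‖∑ i ∈ s, G i‖ ^ 2 ≤ (∑ i ∈ s, ‖G i‖) ^ 2 := by gcongr; exact norm_sum_le _ _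
    _ ≤ _ := sum_sq_le_sum_mul_sum_of_sq_le_mul s (fun i hi ↦ (hw i hi).le)
        (fun i hi ↦ div_nonneg (sq_nonneg _) (hw i hi).le)
        (fun i hi ↦ (mul_div_cancel₀ _ (hw i hi).ne').ge)

theorem mixC_apply_eq {n : ℕ} (Y : Fin n → ℝ) (k l : Fin n) :
    mixC Y k l = (if k = l then ∑ i, Y i else 0) - Y k := by
  unfold mixC
  split_ifs <;> simp [Finset.sum_erase_eq_sub, *]

variable {E : Type*} [NormedAddCommGroup E] [InnerProductSpace ℝ E]

theorem sum_mixC_mul_inner_div_eq {n : ℕ} {w : Fin n → ℝ} (hw : ∀ k, w k ≠ 0) (G : Fin n → E) :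
    ∑ k, ∑ l, mixC w k l * ⟪G l, G k⟫ / w k
      = (∑ i, w i) * ∑ k, ‖G k‖ ^ 2 / w k - ‖∑ k, G k‖ ^ 2 := by
  simp_rw [mixC_apply_eq, sub_mul, sub_div, ite_mul, zero_mul, ite_div, zero_div, sum_sub_distrib,
    sum_ite_eq, if_pos (mem_univ _), mul_div_cancel_left₀ _ (hw _), real_inner_self_eq_norm_sq,
    mul_div_assoc, ← mul_sum, ← sum_inner, ← inner_sum, real_inner_self_eq_norm_sq]

theorem sum_mixC_mul_inner_div_nonneg {n : ℕ} {w : Fin n → ℝ} (hw : ∀ k, 0 < w k)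
    (G : Fin n → E) : 0 ≤ ∑ k, ∑ l, mixC w k l * ⟪G l, G k⟫ / w k := by
  rw [sum_mixC_mul_inner_div_eq (fun k ↦ (hw k).ne'), sub_nonneg]
  exact norm_sum_sq_le_sum_mul_sum_norm_sq_div _ G fun k _ ↦ hw k

theorem sum_inner_smul_sum_smul_div {ι : Type*} [Fintype ι] (c : ℝ) (A : Matrix ι ι ℝ)
    (G : ι → E) (d : ι → ℝ) :
    ∑ k, ⟪c • ∑ l, A k l • G l, G k⟫ / d k = c * ∑ k, ∑ l, A k l * ⟪G l, G k⟫ / d k := by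
  simp_rw [real_inner_smul_left, sum_inner, real_inner_smul_left, mul_div_assoc, sum_div, mul_sum,
    mul_div_assoc]

theorem stmt8_general {n : ℕ} (θ ρ κ C₀ : ℝ)
    (hθ : 0 < θ) (hρ : 0 < ρ) (hκ : 0 ≤ κ) (hC₀ : 0 < C₀)
    (m ρ' : Fin n → ℝ) (hm : ∀ k, 0 < m k) (hρ' : ∀ k, 0 < ρ' k)
    (D : Matrix (Fin 3) (Fin 3) ℝ) (h : EuclideanSpace ℝ (Fin 3))
    (G : Fin n → EuclideanSpace ℝ (Fin 3)) (g ω : Fin n → ℝ)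
    (hadm : 0 ≤ -(ρ * ∑ k, g k * ω k)) :
    (0 ≤ (2 * ρ / θ) * (∑ i, ∑ j, D i j ^ 2) + κ * ‖h‖ ^ 2 / θ ^ 2
        - (∑ k, ⟪(-(C₀ / ∑ j, θ * ρ' j / m j)) •
              (∑ l, mixC (fun i => ρ' i / ρ) k l • G l), G k⟫
            / (m k * (θ * ρ' k / m k)))
        - ρ * ∑ k, g k * ω k) ∧
      0 ≤ ∑ k, ∑ l,
          mixC (fun i => ρ' i / ρ) k l * ⟪G l, G k⟫ / (m k * (θ * ρ' k / m k)) := by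
  set Y : Fin n → ℝ := fun i => ρ' i / ρ
  have hden : ∀ k, m k * (θ * ρ' k / m k) = Y k * (θ * ρ) := fun k ↦ by
    simp only [Y]
    field_simp [(hm k).ne']
  have hdiff : 0 ≤ ∑ k, ∑ l, mixC Y k l * ⟪G l, G k⟫ / (m k * (θ * ρ' k / m k)) := by
    rw [show ∑ k, ∑ l, mixC Y k l * ⟪G l, G k⟫ / (m k * (θ * ρ' k / m k))
        = (∑ k, ∑ l, mixC Y k l * ⟪G l, G k⟫ / Y k) / (θ * ρ) by simp_rw [sum_div, hden, div_div]]
    exact div_nonneg (sum_mixC_mul_inner_div_nonneg (fun k ↦ div_pos (hρ' k) hρ) G)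
      (mul_pos hθ hρ).le
  have hπ : 0 ≤ ∑ j, θ * ρ' j / m j :=
    sum_nonneg fun j _ ↦ div_nonneg (mul_pos hθ (hρ' j)).le (hm j).le
  refine ⟨?_, hdiff⟩
  rw [sum_inner_smul_sum_smul_div]
  have hflux := mul_nonneg (div_nonneg hC₀.le hπ) hdiff
  have hvisc : 0 ≤ (2 * ρ / θ) * (∑ i, ∑ j, D i j ^ 2) := by positivity
  have hheat : 0 ≤ κ * ‖h‖ ^ 2 / θ ^ 2 := by positivity
  linarith

/-- Nonnegativity of the entropy production rate
`σ = (2ρ/θ)∑ D_{ij}² + κ‖h‖²/θ² − ∑_k ⟨F_k, G_k⟩/(m_k p_k) − ρ∑ g_k ω_k ≥ 0`,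
where `p_k = θρ'_k/m_k`, `π_m = ∑_k p_k`, `Y_k = ρ'_k/ρ`, and
`F_k = -(C₀/π_m) ∑_l C(Y)_{kl} G_l`; in particular the multicomponent-diffusion
contribution `∑_{k,l} C(Y)_{kl}⟨G_l,G_k⟩/(m_k p_k)` is nonnegative. -/
theorem stmt8 {n : ℕ} (hn : 1 ≤ n) (θ ρ κ C₀ : ℝ)
    (hθ : 0 < θ) (hρ : 0 < ρ) (hκ : 0 ≤ κ) (hC₀ : 0 < C₀)
    (m ρ' : Fin n → ℝ) (hm : ∀ k, 0 < m k) (hρ' : ∀ k, 0 < ρ' k)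
    (hsum : ∑ k, ρ' k = ρ)
    (D : Matrix (Fin 3) (Fin 3) ℝ) (h : EuclideanSpace ℝ (Fin 3))
    (G : Fin n → EuclideanSpace ℝ (Fin 3)) (g ω : Fin n → ℝ)
    (hadm : 0 ≤ -(ρ * ∑ k, g k * ω k)) :
    (0 ≤ (2 * ρ / θ) * (∑ i, ∑ j, D i j ^ 2) + κ * ‖h‖ ^ 2 / θ ^ 2
        - (∑ k, ⟪(-(C₀ / ∑ j, θ * ρ' j / m j)) •
              (∑ l, mixC (fun i => ρ' i / ρ) k l • G l), G k⟫
            / (m k * (θ * ρ' k / m k)))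
        - ρ * ∑ k, g k * ω k) ∧
      0 ≤ ∑ k, ∑ l,
          mixC (fun i => ρ' i / ρ) k l * ⟪G l, G k⟫ / (m k * (θ * ρ' k / m k)) :=
  stmt8_general θ ρ κ C₀ hθ hρ hκ hC₀ m ρ' hm hρ' D h G g ω hadm
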